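/- Let ρ be the sl(2)-representation on ℂ((z)) given by ρ(L_i) = −(h^{i+1}/h′)∂ + (b + ic)h^i for i = −1,0,1, where h,b ∈ ℂ((z)), h′ ≠ 0, c ∈ ℂ. Then the Casimir element C = 4((L_0 − 1/2)² − L_{−1}L_1) acts as the constant (2c+1)². -/

import Mathlib

set_option synthInstance.maxHeartbeats 1000000
set_option maxHeartbeats 1000000

noncomputable section

/-- The derivative `∂ = d/dz` on `ℂ((z))`, as a `ℂ`-linear endomorphism. -/
def Dz : Module.End ℂ (LaurentSeries ℂ) := LaurentSeries.derivative ℂ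

/-- Multiplication by a Laurent series `g`, as a `ℂ`-linear endomorphism of `ℂ((z))`. -/
def mz (g : LaurentSeries ℂ) : Module.End ℂ (LaurentSeries ℂ) where
  toFun f := g * f
  map_add' := mul_add g
  map_smul' c f := by
    show g * (c • f) = c • (g * f)
    rw [← HahnSeries.single_zero_mul_eq_smul, ← HahnSeries.single_zero_mul_eq_smul, mul_left_comm]

/-- `P` is a differential operator on `ℂ((z))` of order `≤ k`: `P = Σ_{j=0}^{k} ξ_j ∂^j`. -/
def DiffOrderLE (P : Module.End ℂ (LaurentSeries ℂ)) (k : ℕ) : Prop :=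
  ∃ ξ : ℕ → LaurentSeries ℂ, P = ∑ j ∈ Finset.range (k + 1), mz (ξ j) * Dz ^ j

/-- `P` is a differential operator on `ℂ((z))` of order `< k` (for `k = 0` this means `P = 0`). -/
def DiffOrderLT (P : Module.End ℂ (LaurentSeries ℂ)) (k : ℕ) : Prop :=
  ∃ ξ : ℕ → LaurentSeries ℂ, P = ∑ j ∈ Finset.range k, mz (ξ j) * Dz ^ j

/-- `P` is a differential operator on `ℂ((z))` of order exactly `k`. -/
def HasOrder (P : Module.End ℂ (LaurentSeries ℂ)) (k : ℕ) : Prop :=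
  DiffOrderLE P k ∧ ¬ DiffOrderLT P k

/-! With `E = (h / h') ∂` the Euler field of the coordinate `h`, one has `ρ(L_i) = h^i (T + i c)`
where `T = b - E`, and `E h = h` gives `T h = h (T - 1)`. Hence
`ρ(L_{-1}) ρ(L_1) = h⁻¹ (T - c) h (T + c) = (T - 1 - c)(T + c)` is a polynomial in `T`, and
`4((T - 1/2)² - (T - 1 - c)(T + c)) = (2c + 1)²`. The only analytic input is the Leibniz rule
for `∂` on `ℂ((z))`. -/

theorem casimir_eq_of_mul_eq_mul_sub_one {K A : Type*} [Field K] [CharZero K] [Ring A]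
    [Algebra K A] {T H H' : A} (hH : H' * H = 1) (hTH : T * H = H * (T - 1)) (c : K) :
    (4 : K) • ((T - (1 / 2 : K) • 1) ^ 2 - (H' * (T - c • 1)) * (H * (T + c • 1))) =
      ((2 * c + 1) ^ 2) • (1 : A) := by
  have hshift : (T - c • 1) * H = H * (T - 1 - c • 1) := by
    rw [sub_mul, hTH, smul_one_mul, mul_sub H (T - 1), mul_smul_one]
  have hprod : (H' * (T - c • 1)) * (H * (T + c • 1)) = (T - 1 - c • 1) * (T + c • 1) := by
    rw [mul_assoc, ← mul_assoc _ H, hshift, mul_assoc, ← mul_assoc H', hH, one_mul]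
  rw [hprod]
  simp only [sq, sub_mul, mul_sub, add_mul, mul_add, smul_mul_assoc, mul_smul_comm, one_mul,
    mul_one]
  module

namespace LaurentSeries

open HahnSeries

variable {R : Type*} [CommRing R]

theorem coeff_single_one_mul_derivative (f : R⸨X⸩) (n : ℤ) :
    (single 1 1 * derivative R f).coeff n = n • f.coeff n := by
  rw [coeff_single_mul, one_mul, derivative_apply, hasseDeriv_coeff]
  simp

theorem support_single_one_mul_derivative_subset (f : R⸨X⸩) :
    (single 1 1 * derivative R f).support ⊆ f.support := fun n hn hf =>
  hn (by rw [coeff_single_one_mul_derivative, hf, smul_zero])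

/-- `z ∂` multiplies the `n`-th coefficient by `n`, so its Leibniz rule needs no reindexing. -/
theorem single_one_mul_derivative_mul (f g : R⸨X⸩) :
    single 1 1 * derivative R (f * g) =
      single 1 1 * derivative R f * g + f * (single 1 1 * derivative R g) := by
  ext n
  rw [coeff_add, coeff_single_one_mul_derivative, coeff_mul,
    coeff_mul_left' f.isPWO_support (support_single_one_mul_derivative_subset f),
    coeff_mul_right' g.isPWO_support (support_single_one_mul_derivative_subset g),
    Finset.smul_sum, ← Finset.sum_add_distrib]
  refine Finset.sum_congr rfl fun ij hij => ?_
  rw [(Finset.mem_antidiagonal.mp hij).2.2.symm]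
  simp only [coeff_single_one_mul_derivative, add_smul, smul_mul_assoc, mul_smul_comm]

theorem derivative_mul (f g : R⸨X⸩) :
    derivative R (f * g) = derivative R f * g + f * derivative R g := by
  have hunit : IsUnit (single (1 : ℤ) (1 : R)) :=
    IsUnit.of_mul_eq_one (single (-1) 1) (by simp [single_mul_single])
  apply hunit.mul_left_cancel
  rw [single_one_mul_derivative_mul]
  ring

end LaurentSeries

/-- Instance search misses `Module.End.instRing` here, since `Module.End ℂ (LaurentSeries ℂ)` is
elaborated with `HahnSeries.instAddCommMonoid` rather than `AddCommGroup.toAddCommMonoid _`. -/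
instance : Ring (Module.End ℂ (LaurentSeries ℂ)) := Module.End.instRing

lemma mz_apply (g f : LaurentSeries ℂ) : mz g f = g * f := rfl

lemma mz_one : mz 1 = 1 := LinearMap.ext one_mul

lemma mz_mul (f g : LaurentSeries ℂ) : mz (f * g) = mz f * mz g := LinearMap.ext (mul_assoc f g)

lemma mz_add (f g : LaurentSeries ℂ) : mz (f + g) = mz f + mz g := LinearMap.ext (add_mul f g)

lemma mz_neg (f : LaurentSeries ℂ) : mz (-f) = -mz f := LinearMap.ext (neg_mul f)

lemma mz_algebraMap (a : ℂ) : mz (algebraMap ℂ (LaurentSeries ℂ) a) = a • 1 :=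
  LinearMap.ext fun f => by
    rw [mz_apply, LinearMap.smul_apply, Module.End.one_apply, HahnSeries.algebraMap_apply',
      PowerSeries.algebraMap_apply, HahnSeries.ofPowerSeries_C, HahnSeries.C_apply,
      HahnSeries.single_zero_mul_eq_smul, Algebra.algebraMap_self, RingHom.id_apply]

lemma mz_mul_comm (f g : LaurentSeries ℂ) : mz f * mz g = mz g * mz f := by
  rw [← mz_mul, mul_comm, mz_mul]

lemma Dz_mul_mz (g : LaurentSeries ℂ) : Dz * mz g = mz (Dz g) + mz g * Dz :=
  LinearMap.ext fun f => LaurentSeries.derivative_mul g f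

/-- The vector field `h ∂_h = (h / h') ∂`. -/
def eulerOp (h : LaurentSeries ℂ) : Module.End ℂ (LaurentSeries ℂ) := mz (h / Dz h) * Dz

lemma eulerOp_mul_mz_self {h : LaurentSeries ℂ} (hder : Dz h ≠ 0) :
    eulerOp h * mz h = mz h * (eulerOp h + 1) := by
  rw [eulerOp, mul_assoc, Dz_mul_mz, mul_add, ← mz_mul, div_mul_cancel₀ h hder, ← mul_assoc,
    mz_mul_comm, mul_assoc, mul_add, mul_one, add_comm]

def sl2Op (h b : LaurentSeries ℂ) (c : ℂ) (i : ℤ) : Module.End ℂ (LaurentSeries ℂ) :=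
  mz (-(h ^ (i + 1) / Dz h)) * Dz + mz ((b + algebraMap ℂ (LaurentSeries ℂ) ((i : ℂ) * c)) * h ^ i)

lemma sl2Op_eq_mz_zpow_mul {h : LaurentSeries ℂ} (hh : h ≠ 0) (b : LaurentSeries ℂ) (c : ℂ)
    (i : ℤ) : sl2Op h b c i = mz (h ^ i) * (mz b - eulerOp h + ((i : ℂ) * c) • 1) := by
  rw [sl2Op, eulerOp, zpow_add_one₀ hh, mul_div_assoc, mul_comm _ (h ^ i), mz_neg, mz_mul,
    mz_mul, mz_add, mz_algebraMap]
  noncomm_ring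

lemma mz_sub_eulerOp_mul_mz_self (b : LaurentSeries ℂ) {h : LaurentSeries ℂ} (hder : Dz h ≠ 0) :
    (mz b - eulerOp h) * mz h = mz h * (mz b - eulerOp h - 1) := by
  rw [sub_mul, eulerOp_mul_mz_self hder, mz_mul_comm]
  noncomm_ring

/-- Let `ρ` be the `sl(2)`-representation on `ℂ((z))` given by
`ρ(L i) = −(h^{i+1}/h′)∂ + (b + i c) h^i` for `i = −1, 0, 1`.  Then the Casimir element
`C = 4((L₀ − 1/2)² − L₋₁ L₁)` acts as the constant `(2c+1)²`. -/
theorem casimir_acts_by_constant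
    (h b : LaurentSeries ℂ) (c : ℂ) (hder : Dz h ≠ 0)
    (ρ : ℤ → Module.End ℂ (LaurentSeries ℂ))
    (hρ : ∀ i : ℤ, ρ i = mz (-(h ^ (i + 1) / Dz h)) * Dz +
      mz ((b + algebraMap ℂ (LaurentSeries ℂ) ((i : ℂ) * c)) * h ^ i)) :
    (4 : ℂ) • ((ρ 0 - (1 / 2 : ℂ) • 1) ^ 2 - ρ (-1) * ρ 1) =
      ((2 * c + 1) ^ 2) • (1 : Module.End ℂ (LaurentSeries ℂ)) := by
  have hh : h ≠ 0 := fun h0 => hder (by rw [h0, map_zero])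
  have hρ' (i : ℤ) : ρ i = mz (h ^ i) * (mz b - eulerOp h + ((i : ℂ) * c) • 1) :=
    (hρ i).trans (sl2Op_eq_mz_zpow_mul hh b c i)
  have hinv : mz h⁻¹ * mz h = 1 := by rw [← mz_mul, inv_mul_cancel₀ hh, mz_one]
  rw [hρ' 0, hρ' (-1), hρ' 1]
  simpa [mz_one, ← sub_eq_add_neg] using casimir_eq_of_mul_eq_mul_sub_one
    hinv (mz_sub_eulerOp_mul_mz_self b hder) c
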